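/- Let H ∈ (0,1/2) and α > 0. Then ∫₀^∞ ( t^{H−1/2} ∫₀^t (t−s)^{−1/2−H} s^{1/2−H} e^{−αs} ds )² dt < ∞. -/

import Mathlib

open MeasureTheory Set Real

/-! With `a = 1/2 - H` the inner integral is `I(t) = ∫₀ᵗ (t - s)^(a-1) s^a e^(-αs) ds`.
For `t ≤ 1`, bounding `s^a e^(-αs) ≤ t^a` gives `t^(-a) I(t) ≤ t^a / a ≤ 1 / a`.
For `t > 1`, splitting the integral at `t / 2` gives
`t^(-a) I(t) ≤ C t⁻¹ + a⁻¹ t^a e^(-αt/2)`, and both terms are square integrable on `(1, ∞)`. -/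

/-- `Γ(a)` times the Riemann–Liouville integral of order `a` of `s ↦ s ^ a * exp (-α * s)`,
evaluated at `t`. -/
noncomputable def rlIntegral (a α t : ℝ) : ℝ :=
  ∫ s in Ioc 0 t, (t - s) ^ (a - 1) * s ^ a * exp (-α * s)

lemma integrableOn_rpow_mul_exp_neg_mul {p b : ℝ} (hp : -1 < p) (hb : 0 < b) :
    IntegrableOn (fun x : ℝ => x ^ p * exp (-b * x)) (Ioi 0) := by
  simpa only [rpow_one] using integrableOn_rpow_mul_exp_neg_mul_rpow hp zero_lt_one hb

lemma integrableOn_sub_rpow_Ioc {a t : ℝ} (ha : 0 < a) (ht : 0 ≤ t) :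
    IntegrableOn (fun s => (t - s) ^ (a - 1)) (Ioc 0 t) := by
  rw [← intervalIntegrable_iff_integrableOn_Ioc_of_le ht]
  simpa using (intervalIntegral.intervalIntegrable_rpow' (a := 0) (b := t)
    (show -1 < a - 1 by linarith)).comp_sub_left t |>.symm

lemma integral_sub_rpow_Ioc {a t : ℝ} (ha : 0 < a) (ht : 0 ≤ t) :
    ∫ s in Ioc 0 t, (t - s) ^ (a - 1) = t ^ a / a := by
  rw [← intervalIntegral.integral_of_le ht,
    intervalIntegral.integral_comp_sub_left (fun u => u ^ (a - 1)), sub_self, sub_zero,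
    integral_rpow (Or.inl (by linarith)), sub_add_cancel, zero_rpow ha.ne', sub_zero]

lemma stronglyMeasurable_setIntegral_Ioc {F : ℝ → ℝ → ℝ} (hF : Measurable (Function.uncurry F))
    (c : ℝ) : StronglyMeasurable fun t => ∫ s in Ioc c t, F t s := by
  have hS : MeasurableSet {q : ℝ × ℝ | q.2 ∈ Ioc c q.1} :=
    (measurableSet_lt measurable_const measurable_snd).inter
      (measurableSet_le measurable_snd measurable_fst)
  convert (hF.indicator hS).stronglyMeasurable.integral_prod_right' (ν := volume) using 2 with t
  rw [← integral_indicator measurableSet_Ioc]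
  rfl

lemma memLp_two_rpow_Ioi {p c : ℝ} (hp : p < -1 / 2) (hc : 0 < c) :
    MemLp (fun t : ℝ => t ^ p) 2 (volume.restrict (Ioi c)) := by
  refine (memLp_two_iff_integrable_sq (by fun_prop)).2 <|
    (integrableOn_Ioi_rpow_of_lt (by linarith : p * 2 < -1) hc).congr_fun (fun t ht => ?_)
      measurableSet_Ioi
  exact_mod_cast rpow_mul_natCast (hc.trans ht).le p 2

lemma memLp_two_rpow_mul_exp_neg_mul {p b : ℝ} (hp : -1 / 2 < p) (hb : 0 < b) :
    MemLp (fun t : ℝ => t ^ p * exp (-b * t)) 2 (volume.restrict (Ioi 0)) := by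
  refine (memLp_two_iff_integrable_sq (by fun_prop)).2 <|
    (integrableOn_rpow_mul_exp_neg_mul (by linarith : -1 < p * 2)
      (by positivity : 0 < b * 2)).congr_fun (fun t ht => ?_) measurableSet_Ioi
  have hpow : t ^ (p * 2) = (t ^ p) ^ 2 := by exact_mod_cast rpow_mul_natCast ht.le p 2
  simp only [mul_pow, ← exp_nat_mul, ← hpow]
  ring_nf

lemma norm_rlIntegral_le {a α t : ℝ} (ha : 0 < a) (hα : 0 ≤ α) (ht : 0 ≤ t) :
    ‖rlIntegral a α t‖ ≤ t ^ a / a * t ^ a := by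
  calc ‖rlIntegral a α t‖ ≤ ∫ s in Ioc 0 t, (t - s) ^ (a - 1) * t ^ a := by
        refine norm_integral_le_of_norm_le ((integrableOn_sub_rpow_Ioc ha ht).mul_const _)
          (ae_restrict_of_forall_mem measurableSet_Ioc fun s ⟨hs, hst⟩ => ?_)
        have hts : 0 ≤ (t - s) ^ (a - 1) := rpow_nonneg (sub_nonneg.2 hst) _
        rw [norm_of_nonneg (by positivity)]
        calc (t - s) ^ (a - 1) * s ^ a * exp (-α * s) ≤ (t - s) ^ (a - 1) * t ^ a * 1 := by
              gcongr
              exact exp_le_one_iff.2 (by nlinarith)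
          _ = (t - s) ^ (a - 1) * t ^ a := mul_one _
    _ = t ^ a / a * t ^ a := by rw [integral_mul_const, integral_sub_rpow_Ioc ha ht]

/-- Splitting at `s = t / 2`: on the left the kernel is at most `(t / 2) ^ (a - 1)`, on the right
the weight is at most `t ^ a * exp (-(α / 2) * t)`. -/
lemma rlIntegrand_le {a α s t : ℝ} (ha : 0 ≤ a) (ha1 : a ≤ 1) (hα : 0 ≤ α) (hs : 0 < s)
    (hst : s ≤ t) :
    (t - s) ^ (a - 1) * s ^ a * exp (-α * s) ≤
      (t / 2) ^ (a - 1) * (s ^ a * exp (-α * s)) +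
        (t - s) ^ (a - 1) * (t ^ a * exp (-(α / 2) * t)) := by
  have ht : 0 ≤ t := hs.le.trans hst
  have hts : 0 ≤ (t - s) ^ (a - 1) := rpow_nonneg (sub_nonneg.2 hst) _
  rcases le_or_gt s (t / 2) with hle | hgt
  · have hker : (t - s) ^ (a - 1) ≤ (t / 2) ^ (a - 1) :=
      rpow_le_rpow_of_nonpos (by linarith) (by linarith) (by linarith)
    have : 0 ≤ (t - s) ^ (a - 1) * (t ^ a * exp (-(α / 2) * t)) := by positivity
    calc (t - s) ^ (a - 1) * s ^ a * exp (-α * s)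
        = (t - s) ^ (a - 1) * (s ^ a * exp (-α * s)) := mul_assoc _ _ _
      _ ≤ (t / 2) ^ (a - 1) * (s ^ a * exp (-α * s)) := by gcongr
      _ ≤ _ := le_add_of_nonneg_right this
  · have hweight : s ^ a * exp (-α * s) ≤ t ^ a * exp (-(α / 2) * t) := by
      have hexp : exp (-α * s) ≤ exp (-(α / 2) * t) := exp_le_exp.2 (by nlinarith)
      exact mul_le_mul (rpow_le_rpow hs.le hst ha) hexp (exp_nonneg _) (rpow_nonneg ht _)
    have : 0 ≤ (t / 2) ^ (a - 1) * (s ^ a * exp (-α * s)) := by positivity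
    calc (t - s) ^ (a - 1) * s ^ a * exp (-α * s)
        = (t - s) ^ (a - 1) * (s ^ a * exp (-α * s)) := mul_assoc _ _ _
      _ ≤ (t - s) ^ (a - 1) * (t ^ a * exp (-(α / 2) * t)) := by gcongr
      _ ≤ _ := le_add_of_nonneg_left this

lemma norm_rlIntegral_le_of_le_one {a α t : ℝ} (ha : 0 < a) (ha1 : a ≤ 1) (hα : 0 < α)
    (ht : 0 ≤ t) :
    ‖rlIntegral a α t‖ ≤ (t / 2) ^ (a - 1) * (∫ s in Ioi 0, s ^ a * exp (-α * s)) +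
      t ^ a / a * (t ^ a * exp (-(α / 2) * t)) := by
  have hweight := integrableOn_rpow_mul_exp_neg_mul (by linarith : -1 < a) hα
  have hweight' := hweight.mono_set (show Ioc 0 t ⊆ Ioi 0 from Ioc_subset_Ioi_self)
  have hker := integrableOn_sub_rpow_Ioc ha ht
  calc ‖rlIntegral a α t‖
      ≤ ∫ s in Ioc 0 t, (t / 2) ^ (a - 1) * (s ^ a * exp (-α * s)) +
          (t - s) ^ (a - 1) * (t ^ a * exp (-(α / 2) * t)) := by
        refine norm_integral_le_of_norm_le ((hweight'.const_mul _).add (hker.mul_const _))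
          (ae_restrict_of_forall_mem measurableSet_Ioc fun s ⟨hs, hst⟩ => ?_)
        have hts : 0 ≤ (t - s) ^ (a - 1) := rpow_nonneg (sub_nonneg.2 hst) _
        rw [norm_of_nonneg (by positivity)]
        exact rlIntegrand_le ha.le ha1 hα.le hs hst
    _ = (t / 2) ^ (a - 1) * (∫ s in Ioc 0 t, s ^ a * exp (-α * s)) +
          t ^ a / a * (t ^ a * exp (-(α / 2) * t)) := by
        rw [integral_add (hweight'.const_mul _) (hker.mul_const _), integral_const_mul,
          integral_mul_const, integral_sub_rpow_Ioc ha ht]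
    _ ≤ _ := by
        gcongr
        · exact ae_restrict_of_forall_mem measurableSet_Ioi fun s hs =>
            mul_nonneg (rpow_nonneg (le_of_lt hs) a) (exp_nonneg _)
        · exact Ioc_subset_Ioi_self

@[fun_prop]
lemma measurable_rlIntegral (a α : ℝ) : Measurable (rlIntegral a α) := by
  refine (stronglyMeasurable_setIntegral_Ioc
    (F := fun t s => (t - s) ^ (a - 1) * s ^ a * exp (-α * s)) ?_ 0).measurable
  change Measurable fun q : ℝ × ℝ => (q.1 - q.2) ^ (a - 1) * q.2 ^ a * exp (-α * q.2)
  fun_prop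

lemma integrableOn_Ioc_sq_rpow_neg_mul_rlIntegral {a α : ℝ} (ha : 0 < a) (hα : 0 ≤ α) :
    IntegrableOn (fun t => (t ^ (-a) * rlIntegral a α t) ^ 2) (Ioc 0 1) := by
  have hf : Measurable fun t : ℝ => t ^ (-a) * rlIntegral a α t := by fun_prop
  refine (MemLp.of_bound hf.aestronglyMeasurable (1 / a)
    (ae_restrict_of_forall_mem measurableSet_Ioc fun t ⟨ht0, ht1⟩ => ?_)).integrable_sq
  calc ‖t ^ (-a) * rlIntegral a α t‖ = t ^ (-a) * ‖rlIntegral a α t‖ := by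
        rw [norm_mul, norm_of_nonneg (rpow_nonneg ht0.le _)]
    _ ≤ t ^ (-a) * (t ^ a / a * t ^ a) := by
        gcongr; exact norm_rlIntegral_le ha hα ht0.le
    _ = t ^ a / a := by
        rw [rpow_neg ht0.le]; field_simp
    _ ≤ 1 / a := by
        gcongr; exact rpow_le_one ht0.le ht1 ha.le

lemma integrableOn_Ioi_one_sq_rpow_neg_mul_rlIntegral {a α : ℝ} (ha : 0 < a) (ha1 : a ≤ 1)
    (hα : 0 < α) :
    IntegrableOn (fun t => (t ^ (-a) * rlIntegral a α t) ^ 2) (Ioi 1) := by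
  have hf : Measurable fun t : ℝ => t ^ (-a) * rlIntegral a α t := by fun_prop
  set K := ∫ s in Ioi 0, s ^ a * exp (-α * s)
  have hK : 0 ≤ K := setIntegral_nonneg measurableSet_Ioi fun s hs =>
    mul_nonneg (rpow_nonneg (le_of_lt hs) a) (exp_nonneg _)
  have hg : MemLp
      (fun t => 2 ^ (1 - a) * K * t ^ (-1 : ℝ) + 1 / a * (t ^ a * exp (-(α / 2) * t)))
      2 (volume.restrict (Ioi 1)) :=
    ((memLp_two_rpow_Ioi (by norm_num) one_pos).const_mul _).add
      (((memLp_two_rpow_mul_exp_neg_mul (by linarith) (by positivity)).mono_measure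
        (Measure.restrict_mono (Ioi_subset_Ioi zero_le_one) le_rfl)).const_mul _)
  refine (hg.of_le hf.aestronglyMeasurable
    (ae_restrict_of_forall_mem measurableSet_Ioi fun t ht => ?_)).integrable_sq
  have ht0 : 0 < t := one_pos.trans ht
  rw [norm_mul, norm_of_nonneg (rpow_nonneg ht0.le _), norm_of_nonneg (add_nonneg
    (mul_nonneg (mul_nonneg (by positivity) hK) (rpow_nonneg ht0.le _)) (by positivity))]
  calc t ^ (-a) * ‖rlIntegral a α t‖
      ≤ t ^ (-a) * ((t / 2) ^ (a - 1) * K + t ^ a / a * (t ^ a * exp (-(α / 2) * t))) := by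
        gcongr; exact norm_rlIntegral_le_of_le_one ha ha1 hα ht0.le
    _ = 2 ^ (1 - a) * K * t ^ (-1 : ℝ) + 1 / a * (t ^ a * exp (-(α / 2) * t)) := by
        rw [div_rpow ht0.le zero_le_two, rpow_sub ht0, rpow_sub two_pos, rpow_sub two_pos,
          rpow_neg ht0.le, rpow_neg_one, rpow_one, rpow_one]
        field_simp

lemma integrableOn_sq_rpow_neg_mul_rlIntegral {a α : ℝ} (ha : 0 < a) (ha1 : a ≤ 1) (hα : 0 < α) :
    IntegrableOn (fun t => (t ^ (-a) * rlIntegral a α t) ^ 2) (Ioi 0) := by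
  rw [← Ioc_union_Ioi_eq_Ioi zero_le_one]
  exact (integrableOn_Ioc_sq_rpow_neg_mul_rlIntegral ha hα.le).union
    (integrableOn_Ioi_one_sq_rpow_neg_mul_rlIntegral ha ha1 hα)

theorem stmt18 (H α : ℝ) (hH : H ∈ Set.Ioo (0:ℝ) (1/2)) (hα : 0 < α) :
    IntegrableOn
      (fun t : ℝ => (t ^ (H - 1/2) *
        ∫ s in Set.Ioc (0:ℝ) t, (t - s) ^ (-1/2 - H) * s ^ (1/2 - H) * Real.exp (-α * s)) ^ 2)
      (Set.Ioi (0:ℝ)) := by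
  obtain ⟨hH0, hH1⟩ := hH
  have h := integrableOn_sq_rpow_neg_mul_rlIntegral (a := 1 / 2 - H) (by linarith) (by linarith) hα
  unfold rlIntegral at h
  rwa [neg_sub, show 1 / 2 - H - 1 = -1 / 2 - H by ring] at h
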